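/- arXiv:1907.00202 — 3 statements merged into one kernel-verified Lean document; each statement's English description precedes it below -/
import Mathlib

section
/- For every N ≥ 3, the class of graphs with chromatic number exactly N is not closed under elementary equivalence; more concretely (the key combinatorial fact used): for N ≥ 3 and every n ≥ 1, the graph G_n obtained by joining every vertex of the cycle C_{2n+1} to every vertex of the complete graph K_{N-2} has chromatic number N+1, i.e. G_n is (N+1)-colourable but not N-colourable. -/
/-- The join of two simple graphs: both graphs side by side, with every vertex
of the first adjacent to every vertex of the second. -/
def SimpleGraph.joinG {α β : Type*} (G : SimpleGraph α) (H : SimpleGraph β) :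
    SimpleGraph (α ⊕ β) where
  Adj u v := match u, v with
    | .inl a, .inl b => G.Adj a b
    | .inr a, .inr b => H.Adj a b
    | _, _ => True
  symm := ⟨by rintro (a | a) (b | b) h <;> first | exact h.symm | trivial⟩
  loopless := ⟨by rintro (a | a) h <;> exact h.ne rfl⟩

/-! A colouring of `G.joinG H` uses disjoint sets of colours on the two sides, since every
vertex of `G` is adjacent to every vertex of `H`; hence `χ(G.joinG H) = χ(G) + χ(H)`. An odd
cycle has chromatic number `3` and `K_{N-2}` has chromatic number `N - 2`. -/

namespace SimpleGraph

variable {α β γ δ : Type*} {G : SimpleGraph α} {H : SimpleGraph β}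

@[simp] lemma joinG_adj_inl_inl {a b : α} : (G.joinG H).Adj (.inl a) (.inl b) ↔ G.Adj a b :=
  Iff.rfl

@[simp] lemma joinG_adj_inr_inr {a b : β} : (G.joinG H).Adj (.inr a) (.inr b) ↔ H.Adj a b :=
  Iff.rfl

@[simp] lemma joinG_adj_inl_inr (a : α) (b : β) : (G.joinG H).Adj (.inl a) (.inr b) :=
  trivial

def Coloring.joinG (cG : G.Coloring γ) (cH : H.Coloring δ) : (G.joinG H).Coloring (γ ⊕ δ) :=
  Coloring.mk (Sum.map cG cH) <| by
    rintro (a | a) (b | b) h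
    · exact fun hab => cG.valid h (Sum.inl_injective hab)
    · exact Sum.inl_ne_inr
    · exact Sum.inr_ne_inl
    · exact fun hab => cH.valid h (Sum.inr_injective hab)

lemma Colorable.joinG {a b : ℕ} (hG : G.Colorable a) (hH : H.Colorable b) :
    (G.joinG H).Colorable (a + b) := by
  obtain ⟨cG⟩ := hG
  obtain ⟨cH⟩ := hH
  simpa using (cG.joinG cH).colorable

lemma Colorable.exists_add_eq_of_joinG {n : ℕ} (h : (G.joinG H).Colorable n) :
    ∃ a b, a + b = n ∧ G.Colorable a ∧ H.Colorable b := by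
  classical
  obtain ⟨c⟩ := h
  let T : Finset (Fin n) := Finset.univ.filter fun i => ∃ y, c (.inr y) = i
  let cH : H.Coloring T := Coloring.mk (fun y => ⟨c (.inr y), by simp [T]⟩)
    fun hxy hc => c.valid (joinG_adj_inr_inr.mpr hxy) (congrArg Subtype.val hc)
  have hcolG (x : α) : c (.inl x) ∈ Tᶜ := by
    simpa [T] using fun y hy => c.valid (joinG_adj_inl_inr x y) hy.symm
  let cG : G.Coloring ↥Tᶜ := Coloring.mk (fun x => ⟨c (.inl x), hcolG x⟩)
    fun hxy hc => c.valid (joinG_adj_inl_inl.mpr hxy) (congrArg Subtype.val hc)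
  exact ⟨Tᶜ.card, T.card, T.card_compl_add_card.trans (Fintype.card_fin n),
    by simpa only [Fintype.card_coe] using cG.colorable,
    by simpa only [Fintype.card_coe] using cH.colorable⟩

end SimpleGraph

open SimpleGraph in
/-- For `N ≥ 3` and `n ≥ 1`, the join of the odd cycle `C_{2n+1}` with the complete
graph `K_{N-2}` is `(N+1)`-colourable but not `N`-colourable, i.e. has chromatic
number `N+1`. -/
theorem join_oddCycle_complete_chromatic (N n : ℕ) (hN : 3 ≤ N) (hn : 1 ≤ n) :
    ((SimpleGraph.cycleGraph (2 * n + 1)).joinG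
        (SimpleGraph.completeGraph (Fin (N - 2)))).Colorable (N + 1) ∧
    ¬ ((SimpleGraph.cycleGraph (2 * n + 1)).joinG
        (SimpleGraph.completeGraph (Fin (N - 2)))).Colorable N := by
  have hlen : 2 ≤ 2 * n + 1 := by omega
  have hcycle3 : (cycleGraph (2 * n + 1)).Colorable 3 := by
    simpa using (cycleGraph.tricoloring _ hlen).colorable
  have hcycle2 : ¬ (cycleGraph (2 * n + 1)).Colorable 2 := by
    rw [← chromaticNumber_le_iff_colorable,
      chromaticNumber_cycleGraph_of_odd _ hlen (odd_two_mul_add_one n)]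
    decide
  have hcomplete : (completeGraph (Fin (N - 2))).Colorable (N - 2) := by
    simpa using (selfColoring (completeGraph (Fin (N - 2)))).colorable
  refine ⟨(hcycle3.joinG hcomplete).mono (by omega), fun h => ?_⟩
  obtain ⟨a, b, hab, ha, hb⟩ := h.exists_add_eq_of_joinG
  have hNb : N - 2 ≤ b := by
    simpa using hb.card_le_of_pairwise_adj id fun _ _ hij => hij
  exact hcycle2 (ha.mono (by omega))
end

section
/- Let P be a poset. If for all p, q in P with p ≰ q there exists an ω-filter Γ of P with p ∈ Γ and q ∉ Γ, then P is representable: the map h : P → 𝒫(F), where F is the set of ω-filters of P and h(a) = {Γ ∈ F : a ∈ Γ}, is an order embedding preserving all existing finite meets and joins. -/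
/-- An ω-filter of a poset: upward closed, closed under existing finite meets,
and prime for existing finite joins. -/
def IsOmegaFilter {P : Type*} [PartialOrder P] (Γ : Set P) : Prop :=
  (∀ a b : P, a ∈ Γ → a ≤ b → b ∈ Γ) ∧
  (∀ (S : Finset P) (m : P), ↑S ⊆ Γ → IsGLB (S : Set P) m → m ∈ Γ) ∧
  (∀ (S : Finset P) (j : P), IsLUB (S : Set P) j → j ∈ Γ → ∃ s ∈ S, s ∈ Γ)

namespace IsOmegaFilter

variable {P : Type*} [PartialOrder P] {Γ : Set P}

theorem mem_of_le (hΓ : IsOmegaFilter Γ) {a b : P} (ha : a ∈ Γ) (hab : a ≤ b) : b ∈ Γ :=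
  hΓ.1 a b ha hab

theorem mem_iff_forall_mem_of_isGLB (hΓ : IsOmegaFilter Γ) {S : Finset P} {m : P}
    (hm : IsGLB (S : Set P) m) : m ∈ Γ ↔ ∀ s ∈ S, s ∈ Γ :=
  ⟨fun hmΓ _ hs => hΓ.mem_of_le hmΓ (hm.1 hs), fun h => hΓ.2.1 S m h hm⟩

theorem mem_iff_exists_mem_of_isLUB (hΓ : IsOmegaFilter Γ) {S : Finset P} {j : P}
    (hj : IsLUB (S : Set P) j) : j ∈ Γ ↔ ∃ s ∈ S, s ∈ Γ :=
  ⟨hΓ.2.2 S j hj, fun ⟨_, hs, hsΓ⟩ => hΓ.mem_of_le hsΓ (hj.1 hs)⟩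

end IsOmegaFilter

/-- If ω-filters separate `p ≰ q`, then `a ↦ {Γ : ω-filter | a ∈ Γ}` is an order
embedding into the powerset of the set of ω-filters, preserving all existing
finite meets (as intersections) and finite joins (as unions). -/
theorem representable_of_omegaFilter_separation {P : Type*} [PartialOrder P]
    (hsep : ∀ p q : P, ¬ p ≤ q → ∃ Γ : Set P, IsOmegaFilter Γ ∧ p ∈ Γ ∧ q ∉ Γ) :
    (∀ a b : P, a ≤ b ↔
        {Γ : {Γ : Set P // IsOmegaFilter Γ} | a ∈ Γ.1} ⊆
        {Γ : {Γ : Set P // IsOmegaFilter Γ} | b ∈ Γ.1}) ∧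
    (∀ (S : Finset P) (m : P), IsGLB (S : Set P) m →
        {Γ : {Γ : Set P // IsOmegaFilter Γ} | m ∈ Γ.1} =
        ⋂ s ∈ S, {Γ : {Γ : Set P // IsOmegaFilter Γ} | s ∈ Γ.1}) ∧
    (∀ (S : Finset P) (j : P), IsLUB (S : Set P) j →
        {Γ : {Γ : Set P // IsOmegaFilter Γ} | j ∈ Γ.1} =
        ⋃ s ∈ S, {Γ : {Γ : Set P // IsOmegaFilter Γ} | s ∈ Γ.1}) := by
  refine ⟨fun a b => ⟨fun hab Γ ha => Γ.2.mem_of_le ha hab, fun hsub => ?_⟩,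
    fun S m hm => ?_, fun S j hj => ?_⟩
  · by_contra hab
    obtain ⟨Γ, hΓ, ha, hb⟩ := hsep a b hab
    exact hb (hsub (a := ⟨Γ, hΓ⟩) ha)
  · ext Γ
    simpa only [Set.mem_ofPred_eq, Set.mem_iInter] using Γ.2.mem_iff_forall_mem_of_isGLB hm
  · ext Γ
    simpa only [Set.mem_ofPred_eq, Set.mem_iUnion, exists_prop] using
      Γ.2.mem_iff_exists_mem_of_isLUB hj
end

section
/- For every N ≥ 2, there is no finite set of first-order sentences in the language of graphs whose models (among graphs) are exactly the N-colourable graphs; i.e., the class of N-colourable graphs is not finitely axiomatisable. -/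
open FirstOrder

namespace ColorAux

open FirstOrder.Language Filter SimpleGraph

/-- Parity lemma: a closed `±1`-walk of odd length `< m` in `ZMod m` is impossible. -/
lemma no_odd_closed_seq {m : ℕ} (hm : 2 < m) {l : ℕ} (hodd : Odd l) (hlen : l < m)
    (z : ℕ → ZMod m) (hadj : ∀ j < l, z (j + 1) - z j = 1 ∨ z j - z (j + 1) = 1)
    (hclosed : z l = z 0) : False := by
  haveI : NeZero m := ⟨by omega⟩
  have key : ∀ j, j ≤ l → ∃ s : ℤ, z j = z 0 + (s : ZMod m) ∧ -(j : ℤ) ≤ s ∧ s ≤ j ∧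
      s % 2 = (j : ℤ) % 2 := by
    intro j
    induction j with
    | zero => intro _; exact ⟨0, by simp, by simp, by simp, by simp⟩
    | succ j ih =>
      intro hj
      obtain ⟨s, hz, h1, h2, h3⟩ := ih (by omega)
      rcases hadj j (by omega) with h | h
      · refine ⟨s + 1, ?_, by omega, by push_cast; omega, by omega⟩
        have hzz : z (j + 1) = z j + 1 := by rw [← h]; ring
        rw [hzz, hz]; push_cast; ring
      · refine ⟨s - 1, ?_, by push_cast; omega, by omega, by omega⟩
        have hzz : z (j + 1) = z j - 1 := by rw [← h]; ring
        rw [hzz, hz]; push_cast; ring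
  obtain ⟨s, hz, h1, h2, h3⟩ := key l le_rfl
  rw [hclosed] at hz
  have hs0 : (s : ZMod m) = 0 := left_eq_add.mp hz
  have hdvd : (m : ℤ) ∣ s := (ZMod.intCast_zmod_eq_zero_iff_dvd s m).1 hs0
  have hs : s = 0 := by
    by_contra hs
    have h4 : (m : ℤ) ∣ |s| := (dvd_abs _ _).2 hdvd
    have h5 : (m : ℤ) ≤ |s| := Int.le_of_dvd (abs_pos.2 hs) h4
    have h6 : |s| ≤ (l : ℤ) := abs_le.2 ⟨h1, h2⟩
    have : (m : ℤ) ≤ l := le_trans h5 h6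
    omega
  have hl1 : l % 2 = 1 := Nat.odd_iff.1 hodd
  omega

/-- Odd circulant-cycles on `ZMod (2*n+3)` admit no proper 2-colouring. -/
lemma odd_cycle_not_two_colorable (n : ℕ) (C : ZMod (2 * n + 3) → Fin 2)
    (h : ∀ a b : ZMod (2 * n + 3), a - b = 1 ∨ b - a = 1 → C a ≠ C b) : False := by
  have claim : ∀ j : ℕ, (C ((j : ZMod (2 * n + 3)))).val =
      if j % 2 = 0 then (C 0).val else 1 - (C 0).val := by
    intro j
    induction j with
    | zero => simp
    | succ j ih =>
      have hadj : ((j + 1 : ℕ) : ZMod (2 * n + 3)) - ((j : ℕ) : ZMod (2 * n + 3)) = 1 := by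
        push_cast; ring
      have hne := h _ _ (Or.inl hadj)
      have hne' : (C ((j + 1 : ℕ) : ZMod (2 * n + 3))).val ≠
          (C ((j : ℕ) : ZMod (2 * n + 3))).val := fun e => hne (Fin.ext e)
      have b1 := (C ((j + 1 : ℕ) : ZMod (2 * n + 3))).isLt
      have b2 := (C ((j : ℕ) : ZMod (2 * n + 3))).isLt
      have b3 := (C (0 : ZMod (2 * n + 3))).isLt
      by_cases hj2 : j % 2 = 0
      · rw [if_pos hj2] at ih
        rw [if_neg (by omega)]
        omega
      · rw [if_neg hj2] at ih
        rw [if_pos (by omega)]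
        omega
  have hself := claim (2 * n + 3)
  have h0 : ((2 * n + 3 : ℕ) : ZMod (2 * n + 3)) = 0 := ZMod.natCast_self _
  rw [h0, if_neg (by omega : ¬ (2 * n + 3) % 2 = 0)] at hself
  have b3 := (C (0 : ZMod (2 * n + 3))).isLt
  omega

/-- A graph with no odd closed walks is 2-colourable. -/
lemma colorable_two {V : Type} (G : SimpleGraph V)
    (h : ∀ (v : V) (p : G.Walk v v), ¬Odd p.length) : G.Colorable 2 := by
  classical
  have hreach : ∀ v : V, G.Reachable ((G.connectedComponentMk v).out) v := by
    intro v
    exact SimpleGraph.ConnectedComponent.exact (Quot.out_eq (G.connectedComponentMk v))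
  refine ⟨SimpleGraph.Coloring.mk
    (fun v => (⟨(hreach v).some.length % 2, by omega⟩ : Fin 2)) ?_⟩
  intro v w hadj hEq
  have hcomp : G.connectedComponentMk v = G.connectedComponentMk w :=
    SimpleGraph.ConnectedComponent.sound hadj.reachable
  set p := (hreach v).some with hp
  set q := (hreach w).some with hq
  have hbase : (G.connectedComponentMk w).out = (G.connectedComponentMk v).out := by
    rw [hcomp]
  let q' : G.Walk ((G.connectedComponentMk v).out) w := q.copy hbase rfl
  let r : G.Walk ((G.connectedComponentMk v).out) ((G.connectedComponentMk v).out) :=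
    (p.append (SimpleGraph.Walk.cons hadj SimpleGraph.Walk.nil)).append q'.reverse
  have hrlen : r.length = p.length + 1 + q.length := by
    simp [r, q', SimpleGraph.Walk.length_append, SimpleGraph.Walk.length_reverse]
  have hodd : Odd r.length := by
    have hmod : p.length % 2 = q.length % 2 := by
      have := Fin.mk.injEq (p.length % 2) _ (q.length % 2) _ ▸ hEq
      exact Fin.mk.inj_iff.mp hEq
    rw [hrlen, Nat.odd_iff]
    omega
  exact h _ r hodd

/-- The join of `K_k` with the odd cycle on `ZMod (2*n+3)`. -/
def JG (k n : ℕ) : SimpleGraph (Fin k ⊕ ZMod (2 * n + 3)) where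
  Adj x y := match x, y with
    | .inl i, .inl j => i ≠ j
    | .inl _, .inr _ => True
    | .inr _, .inl _ => True
    | .inr a, .inr b => a - b = 1 ∨ b - a = 1
  symm := by
    constructor
    rintro (i | a) (j | b) h
    · exact fun e => h (by rw [e])
    · trivial
    · trivial
    · exact h.symm
  loopless := by
    constructor
    rintro (i | a) h
    · exact h rfl
    · have h10 : (1 : ZMod (2 * n + 3)) ≠ 0 := by
        haveI : Fact (1 < 2 * n + 3) := ⟨by omega⟩
        exact one_ne_zero
      rcases h with h | h <;>
      · rw [sub_self] at h
        exact h10 h.symm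

lemma JG_not_colorable (N k n : ℕ) (hk : k + 2 = N) : ¬(JG k n).Colorable N := by
  rintro ⟨C⟩
  classical
  set m := 2 * n + 3 with hm
  let ι : Fin k → Fin N := fun i => C (Sum.inl i)
  have hι : Function.Injective ι := by
    intro i j hij
    by_contra hne
    exact C.valid (show (JG k n).Adj (Sum.inl i) (Sum.inl j) from hne) hij
  set S : Finset (Fin N) := (Finset.univ.image ι)ᶜ with hS
  have hcard : S.card = 2 := by
    rw [hS, Finset.card_compl, Finset.card_image_of_injective _ hι]
    simp [← hk]
  let e : ↥S ≃ Fin 2 := S.equivFinOfCardEq hcard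
  have hmem : ∀ a : ZMod m, C (Sum.inr a) ∈ S := by
    intro a
    rw [hS, Finset.mem_compl]
    intro hmem'
    obtain ⟨i, -, hi⟩ := Finset.mem_image.1 hmem'
    exact C.valid (show (JG k n).Adj (Sum.inr a) (Sum.inl i) from trivial) hi.symm
  apply odd_cycle_not_two_colorable n (fun a => e ⟨C (Sum.inr a), hmem a⟩)
  intro a b hab hCab
  have : C (Sum.inr a) ≠ C (Sum.inr b) :=
    C.valid (show (JG k n).Adj (Sum.inr a) (Sum.inr b) from hab)
  exact this (Subtype.ext_iff.1 (e.injective hCab))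

end ColorAux

open FirstOrder

/-- For `N ≥ 2`, there is no finite set of first-order sentences in the language of
graphs whose models among (simple) graphs are exactly the `N`-colourable graphs. -/
theorem colorable_not_finitely_axiomatisable (N : ℕ) (hN : 2 ≤ N) :
    ¬ ∃ T : Finset Language.graph.Sentence,
        ∀ (V : Type) (G : SimpleGraph V),
          ((∀ φ ∈ T, (letI := G.structure; V ⊨ φ)) ↔ G.Colorable N) := by
  rintro ⟨T, hT⟩
  classical
  obtain ⟨k, hk2⟩ : ∃ k, k + 2 = N := ⟨N - 2, by omega⟩
  let u : Ultrafilter ℕ := Filter.hyperfilter ℕ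
  let M : ℕ → Type := fun n => Fin k ⊕ ZMod (2 * n + 3)
  letI inst : ∀ n, Language.graph.Structure (M n) := fun n => (ColorAux.JG k n).structure
  -- Find a sentence in `T` failing on a `u`-large set of the joined odd cycles.
  have hfail : ∀ n : ℕ, ∃ φ ∈ T, ¬(M n ⊨ φ) := by
    intro n
    by_contra hc
    push_neg at hc
    exact ColorAux.JG_not_colorable N k n hk2 ((hT (M n) (ColorAux.JG k n)).1 hc)
  have hphi : ∃ φ ∈ T, ∀ᶠ n in (u : Filter ℕ), ¬(M n ⊨ φ) := by
    by_contra hc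
    push_neg at hc
    have hall : ∀ᶠ n in (u : Filter ℕ), ∀ φ ∈ T, M n ⊨ φ := by
      rw [Filter.eventually_all_finset]
      intro φ hφ
      by_contra h'
      exact h' (hc φ hφ)
    obtain ⟨n, hn⟩ := hall.exists
    obtain ⟨φ, hφ, hbad⟩ := hfail n
    exact hbad (hn φ hφ)
  obtain ⟨φ₀, hφ₀T, hφ₀⟩ := hphi
  -- The ultraproduct.
  let W : Type := (u : Filter ℕ).Product M
  haveI hWmod : W ⊨ Language.Theory.simpleGraph := by
    refine (Language.Theory.model_iff _).2 fun φ hφ => ?_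
    rw [Language.Ultraproduct.sentence_realize]
    exact Filter.Eventually.of_forall fun n =>
      Language.Theory.realize_sentence_of_mem Language.Theory.simpleGraph hφ
  let GW : SimpleGraph W := Language.simpleGraphOfStructure W
  have hstr := @Language.structure_simpleGraphOfStructure W _ hWmod
  have hnotφ₀ : ¬(W ⊨ φ₀) := by
    rw [Language.Ultraproduct.sentence_realize]
    intro hev
    obtain ⟨n, hev1, hev2⟩ := (hev.and hφ₀).exists
    exact hev2 hev1
  -- Elements of the ultraproduct.
  let mkW : (∀ n, M n) → W := fun x => Quotient.mk ((u : Filter ℕ).productSetoid M) x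
  let rep : W → ∀ n, M n := fun v => Quot.out v
  have hrep : ∀ v : W, mkW (rep v) = v := fun v => Quot.out_eq v
  have hsound : ∀ x y : ∀ n, M n, (∀ᶠ n in (u : Filter ℕ), x n = y n) → mkW x = mkW y :=
    fun x y h => Quot.sound h
  let κ : Fin k → W := fun i => mkW (fun n => Sum.inl i)
  have adj_iff : ∀ x y : ∀ n, M n, GW.Adj (mkW x) (mkW y) →
      ∀ᶠ n in (u : Filter ℕ), (ColorAux.JG k n).Adj (x n) (y n) := by
    intro x y h
    have h' : Language.Structure.RelMap (L := Language.graph) Language.adj ![mkW x, mkW y] := h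
    have hfun : ![mkW x, mkW y] =
        fun i => Quotient.mk ((u : Filter ℕ).productSetoid M) (![x, y] i) := by
      funext i
      fin_cases i <;> rfl
    rw [hfun] at h'
    have h'' := (Language.relMap_quotient_mk' _ Language.adj ![x, y]).1 h'
    exact h''
  have hRight : ∀ v : W, (∀ i : Fin k, v ≠ κ i) →
      ∀ᶠ n in (u : Filter ℕ), ∃ a, rep v n = Sum.inr a := by
    intro v hv
    by_contra hc
    have h1 : {n | ¬∃ a, rep v n = Sum.inr a} ∈ u := Ultrafilter.eventually_not.2 hc
    have h2 : (⋃ i ∈ (Set.univ : Set (Fin k)), {n | rep v n = Sum.inl i}) ∈ u := by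
      refine Filter.mem_of_superset h1 fun n hn => ?_
      cases hsum : rep v n with
      | inl i => exact Set.mem_biUnion (Set.mem_univ i) hsum
      | inr a => exact absurd ⟨a, hsum⟩ hn
    obtain ⟨i, -, hi⟩ := (Ultrafilter.finite_biUnion_mem_iff Set.finite_univ).1 h2
    refine hv i ?_
    rw [← hrep v]
    exact hsound _ _ hi
  -- The part of the ultraproduct outside the clique has no odd closed walks.
  let Rset : Set W := {v | ∀ i : Fin k, v ≠ κ i}
  let Gind := GW.induce Rset
  have hEven : ∀ (v0 : ↥Rset) (p : Gind.Walk v0 v0), ¬Odd p.length := by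
    intro v0 p hodd
    set l := p.length with hl
    let x : ℕ → ∀ n, M n := fun j => rep (p.getVert j).1
    have hxW : ∀ j, mkW (x j) = (p.getVert j).1 := fun j => hrep _
    have hA : ∀ j, j < l → ∀ᶠ n in (u : Filter ℕ),
        (ColorAux.JG k n).Adj (x j n) (x (j + 1) n) := by
      intro j hj
      apply adj_iff
      rw [hxW j, hxW (j + 1)]
      exact p.adj_getVert_succ (by omega)
    have hB : ∀ j, ∀ᶠ n in (u : Filter ℕ), ∃ a, x j n = Sum.inr a :=
      fun j => hRight _ (p.getVert j).2
    have hlen : ∀ᶠ n in (u : Filter ℕ), l < 2 * n + 3 :=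
      Nat.hyperfilter_le_atTop (Filter.eventually_atTop.2 ⟨l, fun n hn => by omega⟩)
    have hAll1 : ∀ᶠ n in (u : Filter ℕ), ∀ j ∈ Finset.range l,
        (ColorAux.JG k n).Adj (x j n) (x (j + 1) n) :=
      (Filter.eventually_all_finset _).2 fun j hj => hA j (Finset.mem_range.1 hj)
    have hAll2 : ∀ᶠ n in (u : Filter ℕ), ∀ j ∈ Finset.range (l + 1), ∃ a, x j n = Sum.inr a :=
      (Filter.eventually_all_finset _).2 fun j _ => hB j
    obtain ⟨n, ⟨h1, h2⟩, h3⟩ := ((hAll1.and hAll2).and hlen).exists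
    let z : ℕ → ZMod (2 * n + 3) := fun j =>
      if h : ∃ a, x j n = Sum.inr a then h.choose else 0
    have hz : ∀ j, j ≤ l → x j n = Sum.inr (z j) := by
      intro j hj
      have hex : ∃ a, x j n = Sum.inr a := h2 j (Finset.mem_range.2 (by omega))
      simp only [z, dif_pos hex]
      exact hex.choose_spec
    refine ColorAux.no_odd_closed_seq (m := 2 * n + 3) (by omega) hodd h3 z ?_ ?_
    · intro j hj
      have hadj := h1 j (Finset.mem_range.2 hj)
      rw [hz j (by omega), hz (j + 1) (by omega)] at hadj
      have hor : z j - z (j + 1) = 1 ∨ z (j + 1) - z j = 1 := hadj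
      exact hor.symm
    · have hx0 : x 0 = x l := by
        have e : p.getVert 0 = p.getVert l := by
          rw [p.getVert_zero, hl, p.getVert_length]
        simp only [x, e]
      have e0 := hz 0 (by omega)
      rw [hx0, hz l le_rfl] at e0
      exact Sum.inr.inj e0
  -- Build an `N`-colouring of the ultraproduct graph.
  have hcol : GW.Colorable N := by
    obtain ⟨c2⟩ := ColorAux.colorable_two Gind hEven
    refine ⟨SimpleGraph.Coloring.mk (fun v =>
      if h : ∃ i : Fin k, v = κ i then ⟨h.choose.val, by have := h.choose.isLt; omega⟩
      else ⟨k + (c2 ⟨v, fun i e => h ⟨i, e⟩⟩).val, by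
        have := (c2 ⟨v, fun i e => h ⟨i, e⟩⟩).isLt; omega⟩) ?_⟩
    intro v w hadj hEq
    beta_reduce at hEq
    by_cases hv : ∃ i : Fin k, v = κ i <;> by_cases hw : ∃ i : Fin k, w = κ i
    · rw [dif_pos hv, dif_pos hw] at hEq
      have hvals := congrArg Fin.val hEq
      have : hv.choose = hw.choose := Fin.ext hvals
      exact hadj.ne (by rw [hv.choose_spec, hw.choose_spec, this])
    · rw [dif_pos hv, dif_neg hw] at hEq
      have h1 := hv.choose.isLt
      have hvals := congrArg Fin.val hEq
      simp only at hvals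
      omega
    · rw [dif_neg hv, dif_pos hw] at hEq
      have h1 := hw.choose.isLt
      have hvals := congrArg Fin.val hEq
      simp only at hvals
      omega
    · rw [dif_neg hv, dif_neg hw] at hEq
      have hvals := congrArg Fin.val hEq
      simp only at hvals
      have hne := c2.valid
        (show Gind.Adj ⟨v, fun i e => hv ⟨i, e⟩⟩ ⟨w, fun i e => hw ⟨i, e⟩⟩ from hadj)
      exact hne (Fin.ext (by omega))
  have hall := (hT W GW).2 hcol φ₀ hφ₀T
  rw [hstr] at hall
  exact hnotφ₀ hall
end
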